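/- arXiv:2111.11072 — 3 statements merged into one kernel-verified Lean document; each statement's English description precedes it below -/
import Mathlib

section
/- If P and Q are distinct m-variate polynomials of total degree at most d over a field F, and T ⊆ F has size n, then Δ_mult^(s)(Enc^(s)(P), Enc^(s)(Q)) ≥ n^m · (s − d/n). -/
/-!
The multiplicity of `p` at `a` is the lowest degree of a monomial of the shift `p(z + a)`, and
`d_min^(s) = min(s, mult)`, so each point of `T^m` contributes at least `s - mult(P - Q, a)`.
What remains is the multiplicity Schwartz–Zippel bound
`|T| · ∑_{a ∈ T^m} mult(f, a) ≤ deg f · |T|^m` for `f ≠ 0`, by induction on `m`.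

Write `f = ∑ⱼ fⱼ(y) x₀ʲ` with leading coefficient `L = f_t`. For a fixed tail `a`, take a
lowest-degree monomial `y^e` of `L(y + a)` and let `w(x₀)` be the coefficient of `y^e` in
`f(x₀, y + a)`. Then `w ≠ 0`, `deg w ≤ t`, and the monomial `x₀^r y^e` with `r = mult(w, b)`
survives in `f((b, a) + z)`, so `mult(f, (b, a)) ≤ mult(L, a) + mult(w, b)`. The root
multiplicities of `w` over `b ∈ T` add up to at most `t`, and the induction hypothesis for `L`,
with `deg L + t ≤ deg f`, closes the induction.
-/

open MvPolynomial

/-- The shift `P(z + a)` of a multivariate polynomial. -/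
noncomputable def mshift {F : Type*} [CommRing F] {m : ℕ} (a : Fin m → F)
    (P : MvPolynomial (Fin m) F) : MvPolynomial (Fin m) F :=
  MvPolynomial.bind₁ (fun i => MvPolynomial.X i + MvPolynomial.C (a i)) P

/-- `dminM s R` is the minimum of `s` and the degree of the lowest-degree monomial with a
nonzero coefficient in `R` (it equals `s` when `R = 0`). -/
noncomputable def dminM {F : Type*} [CommRing F] {m : ℕ} (s : ℕ)
    (R : MvPolynomial (Fin m) F) : ℕ :=
  sInf {k : ℕ | k = s ∨ ∃ e : Fin m →₀ ℕ, (e.sum fun _ j => j) = k ∧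
    MvPolynomial.coeff e R ≠ 0}


open scoped Polynomial

section LowestDegree

variable {σ R : Type*} [CommSemiring R]

/-- `lowestDegree (mshift a p)` is the multiplicity of `p` at `a`; for `p = 0` the value is `0`. -/
noncomputable def lowestDegree (p : MvPolynomial σ R) : ℕ :=
  sInf {k | ∃ e : σ →₀ ℕ, e.degree = k ∧ p.coeff e ≠ 0}

theorem lowestDegree_le {p : MvPolynomial σ R} {e : σ →₀ ℕ} (h : p.coeff e ≠ 0) :
    lowestDegree p ≤ e.degree :=
  Nat.sInf_le ⟨e, rfl, h⟩

theorem exists_coeff_ne_zero_degree_eq_lowestDegree {p : MvPolynomial σ R} (hp : p ≠ 0) :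
    ∃ e : σ →₀ ℕ, e.degree = lowestDegree p ∧ p.coeff e ≠ 0 := by
  obtain ⟨e, he⟩ := ne_zero_iff.1 hp
  exact Nat.sInf_mem (s := {k | ∃ e : σ →₀ ℕ, e.degree = k ∧ p.coeff e ≠ 0})
    ⟨_, e, rfl, he⟩

theorem lowestDegree_eq_zero_of_isEmpty [IsEmpty σ] (p : MvPolynomial σ R) :
    lowestDegree p = 0 := by
  rcases eq_or_ne p 0 with rfl | hp
  · simp [lowestDegree]
  obtain ⟨e, he⟩ := ne_zero_iff.1 hp
  simpa [Subsingleton.elim e 0] using lowestDegree_le he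

end LowestDegree

theorem dminM_eq_min {F : Type*} [CommRing F] {m : ℕ} (s : ℕ) {p : MvPolynomial (Fin m) F}
    (hp : p ≠ 0) : dminM s p = min s (lowestDegree p) := by
  obtain ⟨e, he, hpe⟩ := exists_coeff_ne_zero_degree_eq_lowestDegree hp
  refine le_antisymm (le_min (Nat.sInf_le (Or.inl rfl)) (Nat.sInf_le (Or.inr ⟨e, he, hpe⟩))) ?_
  refine le_csInf ⟨s, Or.inl rfl⟩ ?_
  rintro k (rfl | ⟨e', rfl, he'⟩)
  · exact min_le_left _ _
  · exact (min_le_right _ _).trans (lowestDegree_le he')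

section CoeffSlice

variable {σ R : Type*} [CommSemiring R]

noncomputable def coeffSlice (e : σ →₀ ℕ) (p : (MvPolynomial σ R)[X]) : R[X] :=
  .ofFinsupp (.ofCoeff (p.toFinsupp.coeff.mapRange (coeff e) (coeff_zero e)))

@[simp]
theorem coeff_coeffSlice (e : σ →₀ ℕ) (p : (MvPolynomial σ R)[X]) (j : ℕ) :
    (coeffSlice e p).coeff j = (p.coeff j).coeff e := by
  rcases p with ⟨q⟩
  rfl

theorem natDegree_coeffSlice_le (e : σ →₀ ℕ) (p : (MvPolynomial σ R)[X]) :
    (coeffSlice e p).natDegree ≤ p.natDegree :=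
  Polynomial.natDegree_le_iff_coeff_eq_zero.2 fun _ hk => by
    rw [coeff_coeffSlice, Polynomial.coeff_eq_zero_of_natDegree_lt hk, coeff_zero]

theorem coeffSlice_hasseDeriv (e : σ →₀ ℕ) (p : (MvPolynomial σ R)[X]) (j : ℕ) :
    coeffSlice e (Polynomial.hasseDeriv j p) = Polynomial.hasseDeriv j (coeffSlice e p) := by
  ext k
  rw [coeff_coeffSlice, Polynomial.hasseDeriv_coeff, Polynomial.hasseDeriv_coeff,
    coeff_coeffSlice, ← map_natCast (C : R →+* MvPolynomial σ R), coeff_C_mul]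

theorem eval_coeffSlice (e : σ →₀ ℕ) (p : (MvPolynomial σ R)[X]) (b : R) :
    (coeffSlice e p).eval b = (p.eval (C b)).coeff e := by
  have hp : p.natDegree < p.natDegree + 1 := p.natDegree.lt_succ_self
  rw [Polynomial.eval_eq_sum_range' hp,
    Polynomial.eval_eq_sum_range' ((natDegree_coeffSlice_le e p).trans_lt hp), coeff_sum]
  refine Finset.sum_congr rfl fun k _ => ?_
  rw [← map_pow, mul_comm (p.coeff k), coeff_C_mul, coeff_coeffSlice, mul_comm]

theorem coeffSlice_taylor (e : σ →₀ ℕ) (b : R) (p : (MvPolynomial σ R)[X]) :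
    coeffSlice e (Polynomial.taylor (C b) p) = Polynomial.taylor b (coeffSlice e p) := by
  ext j
  rw [coeff_coeffSlice, Polynomial.taylor_coeff, Polynomial.taylor_coeff,
    ← coeffSlice_hasseDeriv, eval_coeffSlice]

end CoeffSlice

namespace Polynomial

variable {R : Type*} [CommRing R]

theorem taylor_coeff_rootMultiplicity_ne_zero {p : R[X]} (hp : p ≠ 0) (b : R) :
    (taylor b p).coeff (p.rootMultiplicity b) ≠ 0 := by
  rw [rootMultiplicity_eq_natTrailingDegree, ← taylor_apply]
  exact trailingCoeff_nonzero_iff_nonzero.2 ((taylor_injective b).ne_iff' (map_zero _) |>.2 hp)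

theorem sum_rootMultiplicity_le_natDegree [IsDomain R] (p : R[X]) (T : Finset R) :
    ∑ b ∈ T, p.rootMultiplicity b ≤ p.natDegree := by
  classical
  calc ∑ b ∈ T, p.rootMultiplicity b
      = ∑ b ∈ T, p.roots.count b := by simp only [count_roots]
    _ ≤ ∑ b ∈ T ∪ p.roots.toFinset, p.roots.count b :=
        Finset.sum_le_sum_of_subset Finset.subset_union_left
    _ = Multiset.card p.roots := Multiset.sum_count_eq_card fun b hb =>
        Finset.mem_union_right _ (Multiset.mem_toFinset.2 hb)
    _ ≤ p.natDegree := card_roots' p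

end Polynomial

theorem Finset.sum_piFinset_succ {α M : Type*} [AddCommMonoid M] {m : ℕ} (T : Finset α)
    (g : (Fin (m + 1) → α) → M) :
    ∑ v ∈ Fintype.piFinset (fun _ => T), g v =
      ∑ a ∈ Fintype.piFinset (fun _ : Fin m => T), ∑ b ∈ T, g (Fin.cons b a) := by
  classical
  have h := Finset.filter_piFinset_eq_map_consEquiv (fun _ : Fin (m + 1) => T) (fun _ => True)
  simp only [Finset.filter_true] at h
  rw [h, Finset.sum_map, Finset.sum_product_right]
  rfl

theorem Finsupp.degree_cons {m : ℕ} (r : ℕ) (e : Fin m →₀ ℕ) :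
    (Finsupp.cons r e).degree = r + e.degree := by
  simp [Finsupp.degree_eq_sum, Fin.sum_univ_succ]

section Shift

variable {F : Type*} [CommRing F] {m : ℕ}

noncomputable def mshiftAlgHom (a : Fin m → F) :
    MvPolynomial (Fin m) F →ₐ[F] MvPolynomial (Fin m) F :=
  bind₁ fun i => X i + C (a i)

theorem mshift_sub (a : Fin m → F) (p q : MvPolynomial (Fin m) F) :
    mshift a (p - q) = mshift a p - mshift a q :=
  map_sub (mshiftAlgHom a) p q

theorem mshift_mshift (a a' : Fin m → F) (p : MvPolynomial (Fin m) F) :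
    mshift a (mshift a' p) = mshift (a + a') p := by
  simp only [mshift, bind₁_bind₁, map_add, bind₁_X_right, algHom_C, Pi.add_apply,
    add_assoc]
  rfl

theorem mshift_zero (p : MvPolynomial (Fin m) F) : mshift 0 p = p := by
  simp [mshift]

theorem mshift_injective (a : Fin m → F) : Function.Injective (mshift a) :=
  Function.LeftInverse.injective (g := mshift (-a)) fun p => by
    rw [mshift_mshift, neg_add_cancel, mshift_zero]

theorem mshift_ne_zero (a : Fin m → F) {p : MvPolynomial (Fin m) F} (hp : p ≠ 0) :
    mshift a p ≠ 0 :=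
  (map_ne_zero_iff (mshiftAlgHom a) (mshift_injective a)).2 hp

theorem finSuccEquiv_mshift_cons (b : F) (a : Fin m → F) (p : MvPolynomial (Fin (m + 1)) F) :
    finSuccEquiv F m (mshift (Fin.cons b a) p) =
      Polynomial.taylor (C b) ((finSuccEquiv F m p).map (mshiftAlgHom a).toRingHom) := by
  have key : (finSuccEquiv F m).toAlgHom.comp (mshiftAlgHom (Fin.cons b a)) =
      ((Polynomial.taylorAlgHom (C b : MvPolynomial (Fin m) F)).restrictScalars F).comp
        ((Polynomial.mapAlgHom (mshiftAlgHom a)).comp (finSuccEquiv F m).toAlgHom) := by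
    refine algHom_ext fun i => Fin.cases ?_ (fun j => ?_) i <;>
      simp [mshiftAlgHom, finSuccEquiv_apply, Polynomial.taylor_apply]
  exact DFunLike.congr_fun key p

theorem lowestDegree_mshift_cons_le (p : MvPolynomial (Fin (m + 1)) F) (b : F) (a : Fin m → F)
    (e : Fin m →₀ ℕ)
    (hw : coeffSlice e ((finSuccEquiv F m p).map (mshiftAlgHom a).toRingHom) ≠ 0) :
    lowestDegree (mshift (Fin.cons b a) p) ≤ e.degree +
      (coeffSlice e ((finSuccEquiv F m p).map (mshiftAlgHom a).toRingHom)).rootMultiplicity b := by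
  set w := coeffSlice e ((finSuccEquiv F m p).map (mshiftAlgHom a).toRingHom)
  have hcoeff : (mshift (Fin.cons b a) p).coeff (e.cons (w.rootMultiplicity b)) =
      (Polynomial.taylor b w).coeff (w.rootMultiplicity b) := by
    rw [← finSuccEquiv_coeff_coeff, finSuccEquiv_mshift_cons, ← coeff_coeffSlice,
      coeffSlice_taylor]
  calc lowestDegree (mshift (Fin.cons b a) p) ≤ (e.cons (w.rootMultiplicity b)).degree :=
        lowestDegree_le (hcoeff ▸ Polynomial.taylor_coeff_rootMultiplicity_ne_zero hw b)
    _ = e.degree + w.rootMultiplicity b := by rw [Finsupp.degree_cons, add_comm]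

end Shift

section Multiplicity

variable {F : Type*} [CommRing F] [IsDomain F] {m : ℕ}

open Finset

theorem sum_lowestDegree_mshift_cons_le {p : MvPolynomial (Fin (m + 1)) F} (hp : p ≠ 0)
    (a : Fin m → F) (T : Finset F) :
    ∑ b ∈ T, lowestDegree (mshift (Fin.cons b a) p) ≤
      #T * lowestDegree (mshift a (finSuccEquiv F m p).leadingCoeff) +
        (finSuccEquiv F m p).natDegree := by
  set q := (finSuccEquiv F m p).map (mshiftAlgHom a).toRingHom
  have hq : q.natDegree = (finSuccEquiv F m p).natDegree :=
    Polynomial.natDegree_map_eq_of_injective (mshift_injective a) _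
  have hL : (finSuccEquiv F m p).leadingCoeff ≠ 0 := by simpa using hp
  obtain ⟨e, he, hce⟩ := exists_coeff_ne_zero_degree_eq_lowestDegree (mshift_ne_zero a hL)
  have hlead : q.leadingCoeff = mshift a (finSuccEquiv F m p).leadingCoeff :=
    Polynomial.leadingCoeff_map_of_injective (mshift_injective a) _
  set w := coeffSlice e q
  have hw : w ≠ 0 := by
    refine fun h => hce ?_
    have : w.coeff q.natDegree = 0 := by rw [h, Polynomial.coeff_zero]
    rwa [coeff_coeffSlice, ← Polynomial.leadingCoeff, hlead] at this
  calc ∑ b ∈ T, lowestDegree (mshift (Fin.cons b a) p)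
      ≤ ∑ b ∈ T, (lowestDegree (mshift a (finSuccEquiv F m p).leadingCoeff) +
          w.rootMultiplicity b) :=
        sum_le_sum fun b _ => he ▸ lowestDegree_mshift_cons_le p b a e hw
    _ = #T * lowestDegree (mshift a (finSuccEquiv F m p).leadingCoeff) +
          ∑ b ∈ T, w.rootMultiplicity b := by
        rw [sum_add_distrib, sum_const, smul_eq_mul]
    _ ≤ _ := by
        grw [w.sum_rootMultiplicity_le_natDegree T, natDegree_coeffSlice_le, hq]

theorem card_mul_sum_lowestDegree_mshift_le (T : Finset F) :
    ∀ {m : ℕ} {p : MvPolynomial (Fin m) F}, p ≠ 0 →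
      #T * ∑ a ∈ Fintype.piFinset (fun _ : Fin m => T), lowestDegree (mshift a p) ≤
        p.totalDegree * #T ^ m
  | 0, p, _ => by simp [lowestDegree_eq_zero_of_isEmpty]
  | m + 1, p, hp => by
    set L := (finSuccEquiv F m p).leadingCoeff
    set t := (finSuccEquiv F m p).natDegree
    have hL : L ≠ 0 := by simpa [L] using hp
    have hdeg : L.totalDegree + t ≤ p.totalDegree := totalDegree_coeff_finSuccEquiv_add_le p t hL
    calc #T * ∑ v ∈ Fintype.piFinset (fun _ => T), lowestDegree (mshift v p)
        = #T * ∑ a ∈ Fintype.piFinset (fun _ : Fin m => T),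
            ∑ b ∈ T, lowestDegree (mshift (Fin.cons b a) p) := by
          rw [sum_piFinset_succ]
      _ ≤ #T * ∑ a ∈ Fintype.piFinset (fun _ : Fin m => T),
            (#T * lowestDegree (mshift a L) + t) := by
          gcongr with a
          exact sum_lowestDegree_mshift_cons_le hp a T
      _ = #T * (#T * ∑ a ∈ Fintype.piFinset (fun _ : Fin m => T), lowestDegree (mshift a L)) +
            t * #T ^ (m + 1) := by
          rw [sum_add_distrib, ← mul_sum, sum_const, Fintype.card_piFinset_const, smul_eq_mul]
          ring
      _ ≤ #T * (L.totalDegree * #T ^ m) + t * #T ^ (m + 1) := by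
          grw [card_mul_sum_lowestDegree_mshift_le T hL]
      _ = (L.totalDegree + t) * #T ^ (m + 1) := by ring
      _ ≤ p.totalDegree * #T ^ (m + 1) := by gcongr

theorem sum_lowestDegree_mshift_le {p : MvPolynomial (Fin m) F} (hp : p ≠ 0) (T : Finset F) :
    ∑ a ∈ Fintype.piFinset (fun _ : Fin m => T), (lowestDegree (mshift a p) : ℚ) ≤
      p.totalDegree * #T ^ m / #T := by
  rcases (#T).eq_zero_or_pos with hT | hT
  · -- `x / 0 = 0`; the sum vanishes as well, since `T^m = ∅` unless `m = 0`
    rw [hT, Nat.cast_zero, div_zero]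
    refine (sum_eq_zero fun a ha => ?_).le
    have : IsEmpty (Fin m) :=
      ⟨fun i => by simpa [card_eq_zero.1 hT] using Fintype.mem_piFinset.1 ha i⟩
    simp [lowestDegree_eq_zero_of_isEmpty]
  · rw [le_div_iff₀ (by positivity), mul_comm, ← Nat.cast_sum]
    exact_mod_cast card_mul_sum_lowestDegree_mshift_le T hp

end Multiplicity

/-- Distance of multivariate multiplicity codes: two distinct polynomials of total degree
at most `d` have multiplicity distance at least `n^m (s - d/n)` between their order-`s`
encodings on the grid `T^m`, where `n = |T|`. -/
theorem multiplicity_code_distance {F : Type*} [Field F] {m s d : ℕ}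
    (T : Finset F) (P Q : MvPolynomial (Fin m) F) (hne : P ≠ Q)
    (hPdeg : P.totalDegree ≤ d) (hQdeg : Q.totalDegree ≤ d) :
    ((∑ a ∈ Fintype.piFinset (fun _ : Fin m => T),
        (s - dminM s (mshift a P - mshift a Q)) : ℕ) : ℚ) ≥
      (T.card : ℚ) ^ m * ((s : ℚ) - (d : ℚ) / (T.card : ℚ)) := by
  have hPQ : P - Q ≠ 0 := sub_ne_zero.2 hne
  have hdeg : (P - Q).totalDegree ≤ d := (totalDegree_sub P Q).trans (max_le hPdeg hQdeg)
  have hpoint (a : Fin m → F) : (s : ℚ) - lowestDegree (mshift a (P - Q)) ≤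
      ((s - dminM s (mshift a P - mshift a Q) : ℕ) : ℚ) := by
    rw [← mshift_sub, dminM_eq_min s (mshift_ne_zero a hPQ), Nat.cast_sub (min_le_left _ _)]
    gcongr
    exact min_le_right _ _
  calc (T.card : ℚ) ^ m * ((s : ℚ) - (d : ℚ) / (T.card : ℚ))
      = ∑ a ∈ Fintype.piFinset (fun _ : Fin m => T), (s : ℚ) - d * T.card ^ m / T.card := by
        simp only [Finset.sum_const, Fintype.card_piFinset_const, nsmul_eq_mul, Nat.cast_pow]
        ring
    _ ≤ ∑ a ∈ Fintype.piFinset (fun _ : Fin m => T),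
          ((s : ℚ) - lowestDegree (mshift a (P - Q))) := by
        rw [Finset.sum_sub_distrib]
        grw [sum_lowestDegree_mshift_le hPQ T, hdeg]
    _ ≤ _ := by
        push_cast
        exact Finset.sum_le_sum fun a _ => hpoint a
end

section
/- Let T ⊆ F, s : T → Z_{≥0}, N = Σ_{a∈T} s(a), e a degree bound, and h : T → F[z] with deg h_a < s(a). Then there is at most one polynomial R ∈ F[x] of degree at most e with Δ_mult^(s)(h, Enc^(s)(R)) < (1/2)(N − e). -/
/-!
Suppose `R₁ ≠ R₂` and let `m a` be the smaller of the two capped agreement orders at `a`.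
Both `h a - R₁(X + a)` and `h a - R₂(X + a)` are divisible by `X ^ m a`, hence so is their
difference `(R₂ - R₁)(X + a)`; so `(X - a) ^ m a` divides the nonzero polynomial `R₂ - R₁` of
degree `≤ e` for every `a ∈ T`, and `∑ m a ≤ e`. Since `s a ≤ m a + mdist₁ a + mdist₂ a`
pointwise, summing gives `N ≤ e + Δ₁ + Δ₂ < N`.
-/

open Polynomial Classical

/-- `agr sa p` is the order of agreement capped at `sa`: the minimum of `sa` and the
multiplicity of `0` as a root of `p` (equal to `sa` when `p = 0`). -/
noncomputable def agr {F : Type*} [CommRing F] (sa : ℕ) (p : Polynomial F) : ℕ :=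
  if p = 0 then sa else min sa (p.rootMultiplicity 0)

/-- The pointwise multiplicity distance `s(a) − min(u_a, s(a))`. -/
noncomputable def mdist {F : Type*} [CommRing F] (sa : ℕ) (p : Polynomial F) : ℕ :=
  sa - agr sa p

open Finset

section Agreement

variable {R : Type*} [CommRing R]

lemma agr_le (sa : ℕ) (p : R[X]) : agr sa p ≤ sa := by
  unfold agr
  split_ifs
  exacts [le_rfl, min_le_left _ _]

lemma X_pow_agr_dvd (sa : ℕ) (p : R[X]) : X ^ agr sa p ∣ p := by
  unfold agr
  split_ifs with hp
  · simp [hp]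
  · refine (pow_dvd_pow X (min_le_right _ _)).trans ?_
    simpa using pow_rootMultiplicity_dvd p 0

lemma X_pow_min_agr_dvd_sub (sa : ℕ) (p q : R[X]) :
    X ^ min (agr sa p) (agr sa q) ∣ p - q :=
  dvd_sub ((pow_dvd_pow X (min_le_left _ _)).trans (X_pow_agr_dvd sa p))
    ((pow_dvd_pow X (min_le_right _ _)).trans (X_pow_agr_dvd sa q))

lemma le_min_agr_add_mdist_add_mdist (sa : ℕ) (p q : R[X]) :
    sa ≤ min (agr sa p) (agr sa q) + (mdist sa p + mdist sa q) := by
  have := agr_le sa p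
  have := agr_le sa q
  unfold mdist
  omega

end Agreement

lemma sum_le_natDegree_of_X_sub_C_pow_dvd {R : Type*} [CommRing R] [IsDomain R] {p : R[X]}
    (hp : p ≠ 0) (T : Finset R) (m : R → ℕ) (hdvd : ∀ a ∈ T, (X - C a) ^ m a ∣ p) :
    ∑ a ∈ T, m a ≤ p.natDegree :=
  calc ∑ a ∈ T, m a
      ≤ ∑ a ∈ T, p.roots.count a := sum_le_sum fun a ha => by
        rw [count_roots]
        exact (le_rootMultiplicity_iff hp).2 (hdvd a ha)
    _ ≤ ∑ a ∈ T ∪ p.roots.toFinset, p.roots.count a := sum_le_sum_of_subset subset_union_left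
    _ = Multiset.card p.roots :=
        Multiset.sum_count_eq_card fun a ha => mem_union_right _ (Multiset.mem_toFinset.2 ha)
    _ ≤ p.natDegree := card_roots' p

theorem unique_decoding_varying_multiplicities_general {F : Type*} [Field F]
    (T : Finset F) (s : F → ℕ) (e N : ℕ) (hN : N = ∑ a ∈ T, s a)
    (h : F → Polynomial F)
    (R₁ R₂ : Polynomial F) (hR₁ : R₁.natDegree ≤ e) (hR₂ : R₂.natDegree ≤ e)
    (hclose₁ : ((∑ a ∈ T, mdist (s a) (h a - R₁.comp (X + C a)) : ℕ) : ℚ) <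
      ((N : ℚ) - (e : ℚ)) / 2)
    (hclose₂ : ((∑ a ∈ T, mdist (s a) (h a - R₂.comp (X + C a)) : ℕ) : ℚ) <
      ((N : ℚ) - (e : ℚ)) / 2) :
    R₁ = R₂ := by
  by_contra hne
  set E₁ : F → F[X] := fun a => h a - R₁.comp (X + C a)
  set E₂ : F → F[X] := fun a => h a - R₂.comp (X + C a)
  set m : F → ℕ := fun a => min (agr (s a) (E₁ a)) (agr (s a) (E₂ a))
  have hdvd : ∀ a ∈ T, (X - C a) ^ m a ∣ R₂ - R₁ := fun a _ => by
    rw [X_sub_C_pow_dvd_iff, sub_comp, ← sub_sub_sub_cancel_left _ _ (h a)]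
    exact X_pow_min_agr_dvd_sub (s a) (E₁ a) (E₂ a)
  have hm : ∑ a ∈ T, m a ≤ e :=
    (sum_le_natDegree_of_X_sub_C_pow_dvd (sub_ne_zero.2 (Ne.symm hne)) T m hdvd).trans
      ((natDegree_sub_le _ _).trans (max_le hR₂ hR₁))
  set Δ₁ := ∑ a ∈ T, mdist (s a) (E₁ a)
  set Δ₂ := ∑ a ∈ T, mdist (s a) (E₂ a)
  have hs : N ≤ ∑ a ∈ T, m a + (Δ₁ + Δ₂) := by
    rw [hN, ← sum_add_distrib, ← sum_add_distrib]
    exact sum_le_sum fun a _ => le_min_agr_add_mdist_add_mdist (s a) (E₁ a) (E₂ a)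
  have hNq : (N : ℚ) ≤ e + (Δ₁ + Δ₂) := by exact_mod_cast hs.trans (Nat.add_le_add_right hm _)
  linarith

/-- Uniqueness of decoding for univariate multiplicity codes with varying multiplicities:
at most one polynomial of degree at most `e` lies within multiplicity distance `(N - e)/2`
of a given received word. -/
theorem unique_decoding_varying_multiplicities {F : Type*} [Field F]
    (T : Finset F) (s : F → ℕ) (e N : ℕ) (hN : N = ∑ a ∈ T, s a)
    (h : F → Polynomial F)
    (hdeg : ∀ a ∈ T, (h a).degree < (s a : WithBot ℕ))
    (R₁ R₂ : Polynomial F) (hR₁ : R₁.natDegree ≤ e) (hR₂ : R₂.natDegree ≤ e)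
    (hclose₁ : ((∑ a ∈ T, mdist (s a) (h a - R₁.comp (X + C a)) : ℕ) : ℚ) <
      ((N : ℚ) - (e : ℚ)) / 2)
    (hclose₂ : ((∑ a ∈ T, mdist (s a) (h a - R₂.comp (X + C a)) : ℕ) : ℚ) <
      ((N : ℚ) - (e : ℚ)) / 2) :
    R₁ = R₂ :=
  unique_decoding_varying_multiplicities_general T s e N hN h R₁ R₂ hR₁ hR₂ hclose₁ hclose₂
end

section
/- Triangle-like inequality for the weighted distance Γ (bivariate case): Let d, ℓ, r, s ∈ N with d ≥ ℓ, r = s − ⌊(d−ℓ)/n⌋, T ⊆ F of size n, and let Q, R ∈ F[x] be distinct polynomials of degree at most ℓ. Let g : T → F_{<r}[z] and w : T × [r] → Z_{≥0} satisfy w(a,i) ≤ (n/2)·((s−i) − (d−ℓ)/n) for all (a,i). Then Γ_w^{s,d,ℓ}(g,Q) + Γ_w^{s,d,ℓ}(g,R) ≥ n²(s − d/n). -/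
/-! At a point `a`, if `g a` agrees with both shifted `Q` and `R` to orders `i` and `j`, then
`R - Q` vanishes at `a` to order at least `min i j`; hence these minima sum to at most
`deg (R - Q) ≤ ℓ` over `T`. Pointwise, the two contributions to `Γ` add up to at least
`n (s - min i j) - (d - ℓ)`: the smaller order `i` contributes `n (s - i) - (d - ℓ) - w(a,i)`,
and the larger one contributes at least `w(a,i)` as a running maximum, or, when `i = j`, the
weight bound `2 w(a,i) ≤ n (s - i) - (d - ℓ)` pays for the second copy. Summing over the `n`
points gives `n² s - n (d - ℓ) - n ℓ`. -/

open Polynomial Classical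

/-- `agrOrd r p` is the largest `j ∈ [r+1]` with `p ≡ 0 mod z^j`: the minimum of `r` and
the multiplicity of `0` as a root of `p` (equal to `r` when `p = 0`). -/
noncomputable def agrOrd {F : Type*} [CommRing F] (r : ℕ) (p : Polynomial F) : ℕ :=
  if p = 0 then r else min r (p.rootMultiplicity 0)

/-- The weighted distance `Γ_w^{s,d,ℓ}(g, R)` between a fractional word `(g, w)` and a
polynomial `R`, with `n = |T|`.  For a point `a` with agreement order `i < r` the
contribution is `max{n((s−i) − (d−ℓ)/n) − w(a,i), max_{j<i} w(a,j)}`, and for agreement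
order `r` it is `max_{j<r} w(a,j)`. -/
noncomputable def Gamma {F : Type*} [Field F] (T : Finset F) (n s d ℓ r : ℕ)
    (g : F → Polynomial F) (w : F → ℕ → ℕ) (R : Polynomial F) : ℚ :=
  ∑ a ∈ T,
    (if agrOrd r (g a - R.comp (X + C a)) < r then
      max ((n : ℚ) * ((s : ℚ) - (agrOrd r (g a - R.comp (X + C a)) : ℚ)) -
          ((d : ℚ) - (ℓ : ℚ)) - (w a (agrOrd r (g a - R.comp (X + C a))) : ℚ))
        (((Finset.range (agrOrd r (g a - R.comp (X + C a)))).sup (w a) : ℕ) : ℚ)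
    else (((Finset.range r).sup (w a) : ℕ) : ℚ))

lemma agrOrd_le {F : Type*} [CommRing F] (r : ℕ) (p : F[X]) : agrOrd r p ≤ r := by
  unfold agrOrd; split_ifs <;> simp

lemma X_pow_agrOrd_dvd {F : Type*} [CommRing F] (r : ℕ) (p : F[X]) : X ^ agrOrd r p ∣ p := by
  unfold agrOrd
  split_ifs with hp
  · simp [hp]
  · have h := pow_rootMultiplicity_dvd p 0
    rw [map_zero, sub_zero] at h
    exact (pow_dvd_pow X (min_le_right r _)).trans h

lemma min_agrOrd_le_rootMultiplicity_sub {F : Type*} [CommRing F] (r : ℕ) {p q : F[X]}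
    (hpq : p ≠ q) : min (agrOrd r p) (agrOrd r q) ≤ (p - q).rootMultiplicity 0 := by
  rw [le_rootMultiplicity_iff (sub_ne_zero.mpr hpq), map_zero, sub_zero]
  exact dvd_sub ((pow_dvd_pow X (min_le_left _ _)).trans (X_pow_agrOrd_dvd r p))
    ((pow_dvd_pow X (min_le_right _ _)).trans (X_pow_agrOrd_dvd r q))

lemma Multiset.sum_count_le_card {α : Type*} [DecidableEq α] (T : Finset α) (M : Multiset α) :
    ∑ a ∈ T, M.count a ≤ Multiset.card M :=
  calc ∑ a ∈ T, M.count a ≤ ∑ a ∈ T ∪ M.toFinset, M.count a :=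
        Finset.sum_le_sum_of_subset Finset.subset_union_left
    _ = Multiset.card M := Multiset.sum_count_eq_card fun _ ha =>
        Finset.mem_union_right _ (Multiset.mem_toFinset.mpr ha)

lemma Polynomial.sum_rootMultiplicity_le_natDegree_s10 {F : Type*} [CommRing F] [IsDomain F]
    (T : Finset F) (p : F[X]) : ∑ a ∈ T, p.rootMultiplicity a ≤ p.natDegree := by
  classical
  simp_rw [← count_roots]
  exact (Multiset.sum_count_le_card T p.roots).trans (card_roots' p)

lemma sum_min_agrOrd_le {F : Type*} [CommRing F] [IsDomain F] {ℓ : ℕ} (r : ℕ) (T : Finset F)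
    {Q R : F[X]} (hQR : Q ≠ R) (hQ : Q.natDegree ≤ ℓ) (hR : R.natDegree ≤ ℓ) (g : F → F[X]) :
    ∑ a ∈ T, min (agrOrd r (g a - Q.comp (X + C a))) (agrOrd r (g a - R.comp (X + C a))) ≤ ℓ :=
  calc _ ≤ ∑ a ∈ T, (R - Q).rootMultiplicity a := by
        refine Finset.sum_le_sum fun a _ => ?_
        have hshift : (g a - Q.comp (X + C a)) - (g a - R.comp (X + C a)) =
            (R - Q).comp (X + C a) := by rw [sub_comp]; ring
        rw [rootMultiplicity_eq_rootMultiplicity, ← hshift]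
        refine min_agrOrd_le_rootMultiplicity_sub r (sub_ne_zero.mp ?_)
        rw [hshift, comp_X_add_C_ne_zero_iff]
        exact sub_ne_zero.mpr hQR.symm
    _ ≤ (R - Q).natDegree := sum_rootMultiplicity_le_natDegree_s10 T (R - Q)
    _ ≤ ℓ := (natDegree_sub_le R Q).trans (max_le hR hQ)

noncomputable def gammaTerm (c : ℕ → ℚ) (r : ℕ) (w : ℕ → ℕ) (i : ℕ) : ℚ :=
  if i < r then max (c i - w i) (((Finset.range i).sup w : ℕ) : ℚ)
  else (((Finset.range r).sup w : ℕ) : ℚ)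

section gammaTerm

variable {c : ℕ → ℚ} {r : ℕ} {w : ℕ → ℕ}

lemma gammaTerm_nonneg (i : ℕ) : 0 ≤ gammaTerm c r w i := by
  unfold gammaTerm
  split_ifs
  · exact le_max_of_le_right (Nat.cast_nonneg _)
  · exact Nat.cast_nonneg _

lemma sub_le_gammaTerm {i : ℕ} (hi : i < r) : c i - w i ≤ gammaTerm c r w i := by
  rw [gammaTerm, if_pos hi]
  exact le_max_left _ _

lemma le_gammaTerm_of_lt {i j : ℕ} (hij : i < j) (hi : i < r) :
    (w i : ℚ) ≤ gammaTerm c r w j := by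
  unfold gammaTerm
  split_ifs
  · exact le_max_of_le_right (mod_cast Finset.le_sup (Finset.mem_range.mpr hij))
  · exact mod_cast Finset.le_sup (Finset.mem_range.mpr hi)

lemma le_gammaTerm_add_gammaTerm_of_le {i j : ℕ} (hij : i ≤ j) (hj : j ≤ r) (hcr : c r ≤ 0)
    (hw : ∀ k < r, 2 * (w k : ℚ) ≤ c k) : c i ≤ gammaTerm c r w i + gammaTerm c r w j := by
  by_cases hi : i < r
  · rcases hij.eq_or_lt with rfl | hij
    · linarith [sub_le_gammaTerm (c := c) (w := w) hi, hw i hi]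
    · linarith [sub_le_gammaTerm (c := c) (w := w) hi,
        le_gammaTerm_of_lt (c := c) (w := w) hij hi, hw i hi]
  · have hir : i = r := by omega
    exact (hir ▸ hcr).trans (add_nonneg (gammaTerm_nonneg _) (gammaTerm_nonneg _))

lemma le_gammaTerm_add_gammaTerm {i j : ℕ} (hi : i ≤ r) (hj : j ≤ r) (hcr : c r ≤ 0)
    (hw : ∀ k < r, 2 * (w k : ℚ) ≤ c k) :
    c (min i j) ≤ gammaTerm c r w i + gammaTerm c r w j := by
  rcases le_total i j with hij | hji
  · rw [min_eq_left hij]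
    exact le_gammaTerm_add_gammaTerm_of_le hij hj hcr hw
  · rw [min_eq_right hji, add_comm]
    exact le_gammaTerm_add_gammaTerm_of_le hji hi hcr hw

end gammaTerm

lemma Gamma_eq_sum_gammaTerm {F : Type*} [Field F] (T : Finset F) (n s d ℓ r : ℕ)
    (g : F → F[X]) (w : F → ℕ → ℕ) (R : F[X]) :
    Gamma T n s d ℓ r g w R = ∑ a ∈ T, gammaTerm (fun i => n * ((s : ℚ) - i) - ((d : ℚ) - ℓ)) r
      (w a) (agrOrd r (g a - R.comp (X + C a))) := rfl

lemma Nat.mul_sub_sub_div_le (n s k : ℕ) : n * (s - (s - k / n)) ≤ k :=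
  (Nat.mul_le_mul_left n tsub_tsub_le).trans (Nat.mul_div_le k n)

theorem gamma_triangle_general {F : Type*} [Field F] {n s d ℓ r : ℕ}
    (hn : 0 < n) (hℓd : ℓ ≤ d) (hr : r = s - (d - ℓ) / n)
    (T : Finset F) (hT : T.card = n)
    (Q R : Polynomial F) (hQR : Q ≠ R)
    (hQdeg : Q.natDegree ≤ ℓ) (hRdeg : R.natDegree ≤ ℓ)
    (g : F → Polynomial F)
    (w : F → ℕ → ℕ)
    (hw : ∀ a ∈ T, ∀ i < r, (w a i : ℚ) ≤
      ((n : ℚ) / 2) * (((s : ℚ) - (i : ℚ)) - ((d : ℚ) - (ℓ : ℚ)) / (n : ℚ))) :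
    Gamma T n s d ℓ r g w Q + Gamma T n s d ℓ r g w R ≥
      (n : ℚ) ^ 2 * ((s : ℚ) - (d : ℚ) / (n : ℚ)) := by
  set c : ℕ → ℚ := fun i => n * ((s : ℚ) - i) - ((d : ℚ) - ℓ) with hc
  have hn0 : (n : ℚ) ≠ 0 := by positivity
  have hcr : c r ≤ 0 := by
    have h : ((n * (s - r) : ℕ) : ℚ) ≤ ((d - ℓ : ℕ) : ℚ) :=
      mod_cast hr ▸ Nat.mul_sub_sub_div_le n s (d - ℓ)
    push_cast [Nat.cast_sub (hr ▸ Nat.sub_le s _ : r ≤ s), Nat.cast_sub hℓd] at h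
    linarith
  have hwc : ∀ a ∈ T, ∀ i < r, 2 * (w a i : ℚ) ≤ c i := by
    intro a ha i hi
    have h := hw a ha i hi
    rw [show (n : ℚ) / 2 * ((s - i) - (d - ℓ) / n) = c i / 2 by rw [hc]; field_simp] at h
    linarith
  set m : F → ℕ := fun a =>
    min (agrOrd r (g a - Q.comp (X + C a))) (agrOrd r (g a - R.comp (X + C a)))
  have hm : ∑ a ∈ T, (m a : ℚ) ≤ ℓ := mod_cast sum_min_agrOrd_le r T hQR hQdeg hRdeg g
  rw [ge_iff_le, Gamma_eq_sum_gammaTerm, Gamma_eq_sum_gammaTerm, ← Finset.sum_add_distrib]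
  calc (n : ℚ) ^ 2 * (s - d / n) ≤ ∑ a ∈ T, c (m a) := by
        simp only [hc, Finset.sum_sub_distrib, ← Finset.mul_sum, Finset.sum_const, hT,
          nsmul_eq_mul]
        rw [show (n : ℚ) ^ 2 * (s - d / n) = n * (n * s - d) by field_simp]
        nlinarith
    _ ≤ _ := Finset.sum_le_sum fun a ha =>
        le_gammaTerm_add_gammaTerm (agrOrd_le r _) (agrOrd_le r _) hcr (hwc a ha)

/-- Triangle-like inequality for the weighted distance `Γ` (bivariate case): for distinct
polynomials `Q, R` of degree at most `ℓ`,
`Γ_w(g,Q) + Γ_w(g,R) ≥ n²(s − d/n)`. -/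
theorem gamma_triangle {F : Type*} [Field F] {n s d ℓ r : ℕ}
    (hn : 0 < n) (hℓd : ℓ ≤ d) (hr : r = s - (d - ℓ) / n)
    (T : Finset F) (hT : T.card = n)
    (Q R : Polynomial F) (hQR : Q ≠ R)
    (hQdeg : Q.natDegree ≤ ℓ) (hRdeg : R.natDegree ≤ ℓ)
    (g : F → Polynomial F) (hg : ∀ a ∈ T, (g a).degree < (r : WithBot ℕ))
    (w : F → ℕ → ℕ)
    (hw : ∀ a ∈ T, ∀ i < r, (w a i : ℚ) ≤
      ((n : ℚ) / 2) * (((s : ℚ) - (i : ℚ)) - ((d : ℚ) - (ℓ : ℚ)) / (n : ℚ))) :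
    Gamma T n s d ℓ r g w Q + Gamma T n s d ℓ r g w R ≥
      (n : ℚ) ^ 2 * ((s : ℚ) - (d : ℚ) / (n : ℚ)) :=
  gamma_triangle_general hn hℓd hr T hT Q R hQR hQdeg hRdeg g w hw
end
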